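/- arXiv:math/9906013 — 6 statements merged into one kernel-verified Lean document; each statement's English description precedes it below -/
import Mathlib

section
/- Let φ₁, …, φₙ : I → ℝ be linearly independent functions on an interval I. Then there exist points x₁, …, xₙ ∈ I such that for every k ∈ {1, …, n}, the k × k matrix with entries φ_j(x_i) (1 ≤ i, j ≤ k) is invertible. -/
/-!
Choose the points one at a time. If `x₁, …, xₖ` already make the `k × k` evaluation matrix
invertible, expand the determinant of the `(k+1) × (k+1)` matrix with last point `t` along its
last row: as a function of `t` it is a linear combination of `φ₁, …, φ_{k+1}` whose last
coefficient is the previous determinant. By linear independence this combination does not vanish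
identically, so some `t ∈ I` makes the larger matrix invertible as well.
-/

open Matrix

variable {α K : Type*} [CommRing K]

theorem det_of_snoc_eq_sum {n : ℕ} (f : Fin (n + 1) → α → K) (x : Fin n → α) (t : α) :
    (of fun i j => f j (Fin.snoc (α := fun _ => α) x t i)).det =
      ∑ j : Fin (n + 1),
        ((-1) ^ (n + (j : ℕ)) * (of fun i j' => f (j.succAbove j') (x i)).det) * f j t := by
  rw [det_succ_row _ (Fin.last n)]
  refine Finset.sum_congr rfl fun j _ => ?_
  have hminor : (of fun i j => f j (Fin.snoc (α := fun _ => α) x t i)).submatrix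
      (Fin.last n).succAbove j.succAbove = of fun i j' => f (j.succAbove j') (x i) := by
    ext i j'
    simp [Fin.succAbove_last]
  rw [hminor]
  simp only [of_apply, Fin.snoc_last, Fin.val_last]
  ring

theorem exists_det_of_snoc_ne_zero {n : ℕ} {f : Fin (n + 1) → α → K}
    (hf : LinearIndependent K f) {x : Fin n → α}
    (hx : (of fun i j => f (Fin.castSucc j) (x i)).det ≠ 0) :
    ∃ t, (of fun i j => f j (Fin.snoc (α := fun _ => α) x t i)).det ≠ 0 := by
  by_contra! hvanish
  set c : Fin (n + 1) → K :=
    fun j => (-1) ^ (n + (j : ℕ)) * (of fun i j' => f (j.succAbove j') (x i)).det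
  have hsum : ∑ j, c j • f j = 0 := by
    funext t
    simpa [det_of_snoc_eq_sum] using hvanish t
  have hlast : c (Fin.last n) = 0 := Fintype.linearIndependent_iff.mp hf c hsum _
  simp only [c, Fin.val_last, Even.neg_one_pow ⟨n, rfl⟩, one_mul, Fin.succAbove_last] at hlast
  exact hx hlast

theorem exists_points_det_leading_minors_ne_zero [Nontrivial K] :
    ∀ {n : ℕ} {f : Fin n → α → K}, LinearIndependent K f →
      ∃ x : Fin n → α, ∀ k (hk : k ≤ n),
        (of fun i j : Fin k => f (Fin.castLE hk j) (x (Fin.castLE hk i))).det ≠ 0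
  | 0, _, _ => ⟨Fin.elim0, fun k hk => by obtain rfl := Nat.le_zero.mp hk; simp⟩
  | n + 1, f, hf => by
    obtain ⟨x, hx⟩ := exists_points_det_leading_minors_ne_zero
      (hf.comp Fin.castSucc (Fin.castSucc_injective n))
    obtain ⟨t, ht⟩ := exists_det_of_snoc_ne_zero hf (by simpa using hx n le_rfl)
    refine ⟨Fin.snoc x t, fun k hk => ?_⟩
    rcases Nat.lt_or_ge n k with hnk | hkn
    · obtain rfl : k = n + 1 := by omega
      simpa using ht
    · have hcast : ∀ i : Fin k, Fin.castLE hk i = (Fin.castLE hkn i).castSucc := fun _ => rfl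
      simpa only [hcast, Fin.snoc_castSucc, Function.comp_apply] using hx k hkn

/-- For linearly independent functions `φ₁,…,φₙ` on `I` there exist points
`x₁,…,xₙ ∈ I` such that all leading principal evaluation matrices
`(φ_j (x_i))_{i,j ≤ k}` are invertible. -/
theorem exists_eval_points_all_leading_minors_invertible
    (n : ℕ) (I : Set ℝ) (φ : Fin n → ℝ → ℝ)
    (hφ : LinearIndependent ℝ (fun j : Fin n => I.restrict (φ j))) :
    ∃ x : Fin n → ℝ, (∀ i, x i ∈ I) ∧
      ∀ k : ℕ, 1 ≤ k → ∀ hk : k ≤ n,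
        IsUnit (Matrix.of fun i j : Fin k =>
          φ (Fin.castLE hk j) (x (Fin.castLE hk i))).det := by
  obtain ⟨x, hx⟩ := exists_points_det_leading_minors_ne_zero hφ
  exact ⟨fun i => x i, fun i => (x i).2, fun k _ hk => (hx k hk).isUnit⟩
end

section
/- Let H : ℝⁿ → ℝ be continuously differentiable and a, b : ℝ^{n-1} → ℝ continuous, such that ∂_{n-1} H(x) = (a(x₁,…,x_{n-1}) · xₙ + b(x₁,…,x_{n-1})) · ∂ₙ H(x) for all x ∈ ℝⁿ. Define G(x₁,…,x_{n-2}, xₙ) := H(x₁,…,x_{n-2}, 0, xₙ). Then for all x ∈ ℝⁿ, H(x₁,…,xₙ) = G(x₁,…,x_{n-2}, exp(∫₀^{x_{n-1}} a(x₁,…,x_{n-2},t) dt) · xₙ + ∫₀^{x_{n-1}} b(x₁,…,x_{n-2},t) · exp(∫₀^t a(x₁,…,x_{n-2},s) ds) dt). -/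
/-!
Along a curve `t ↦ x(t)` that moves the coordinate `x_{n-1}` with unit speed and `xₙ` with speed
`ξ' = -(a ξ + b)`, the derivative of `H` is `∂_{n-1} H - (a ξ + b) ∂ₙ H = 0`, so `H` is constant on
it. The linear ODE for `ξ` is solved by variation of constants, with the constant chosen so that
the curve passes through the given point; at `x_{n-1} = 0` the curve is at the point on the
right-hand side.
-/

open Real intervalIntegral Function

noncomputable def linearFlow (α β : ℝ → ℝ) (C t : ℝ) : ℝ :=
  exp (-∫ s in (0 : ℝ)..t, α s) * (C - ∫ s in (0 : ℝ)..t, β s * exp (∫ r in (0 : ℝ)..s, α r))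

@[simp]
theorem linearFlow_zero (α β : ℝ → ℝ) (C : ℝ) : linearFlow α β C 0 = C := by
  simp [linearFlow]

theorem linearFlow_eq (α β : ℝ → ℝ) (y T : ℝ) :
    linearFlow α β (exp (∫ s in (0 : ℝ)..T, α s) * y
      + ∫ s in (0 : ℝ)..T, β s * exp (∫ r in (0 : ℝ)..s, α r)) T = y := by
  rw [linearFlow, add_sub_cancel_right, ← mul_assoc, ← exp_add, neg_add_cancel, exp_zero, one_mul]

theorem hasDerivAt_linearFlow {α β : ℝ → ℝ} (hα : Continuous α) (hβ : Continuous β) (C t : ℝ) :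
    HasDerivAt (linearFlow α β C) (-(α t * linearFlow α β C t + β t)) t := by
  have hA : HasDerivAt (fun t => ∫ s in (0 : ℝ)..t, α s) (α t) t :=
    (hα.integral_hasStrictDerivAt 0 t).hasDerivAt
  have hexpA : Continuous fun s => exp (∫ r in (0 : ℝ)..s, α r) :=
    continuous_exp.comp (continuous_primitive (fun _ _ => hα.intervalIntegrable _ _) 0)
  have hB : HasDerivAt (fun t => ∫ s in (0 : ℝ)..t, β s * exp (∫ r in (0 : ℝ)..s, α r))
      (β t * exp (∫ r in (0 : ℝ)..t, α r)) t :=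
    ((hβ.mul hexpA).integral_hasStrictDerivAt 0 t).hasDerivAt
  refine (hA.neg.exp.mul (hB.const_sub C)).congr_deriv ?_
  have hexp : exp (-∫ s in (0 : ℝ)..t, α s) * exp (∫ s in (0 : ℝ)..t, α s) = 1 := by
    rw [← exp_add, neg_add_cancel, exp_zero]
  rw [linearFlow]
  linear_combination -β t * hexp

theorem hasDerivAt_update_update {ι : Type*} [Fintype ι] [DecidableEq ι] {i j : ι} (hij : i ≠ j)
    (x : ι → ℝ) {f : ℝ → ℝ} {f' t : ℝ} (hf : HasDerivAt f f' t) :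
    HasDerivAt (fun s => update (update x i s) j (f s)) (Pi.single i 1 + f' • Pi.single j 1) t := by
  rw [hasDerivAt_pi]
  intro k
  rcases eq_or_ne k j with rfl | hkj
  · simpa [hij.symm] using hf
  rcases eq_or_ne k i with rfl | hki
  · simpa [hkj] using hasDerivAt_id' t
  · simpa [hkj, hki] using hasDerivAt_const t (x k)

theorem apply_eq_apply_update_update_of_hasDerivAt {E : Type*} [NormedAddCommGroup E]
    [NormedSpace ℝ E] {ι : Type*} [Fintype ι] [DecidableEq ι] {H : (ι → ℝ) → E}
    (hH : Differentiable ℝ H) {i j : ι} (hij : i ≠ j) {c : (ι → ℝ) → ℝ}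
    (hpde : ∀ y, fderiv ℝ H y (Pi.single i 1) = c y • fderiv ℝ H y (Pi.single j 1))
    (x : ι → ℝ) {ξ : ℝ → ℝ} (hξ : ∀ t, HasDerivAt ξ (-c (update (update x i t) j (ξ t))) t)
    (hξx : ξ (x i) = x j) (t : ℝ) :
    H x = H (update (update x i t) j (ξ t)) := by
  set φ := fun t => update (update x i t) j (ξ t)
  have hφx : φ (x i) = x := by simp [φ, hξx]
  have hderiv : ∀ t, HasDerivAt (H ∘ φ) 0 t := by
    intro t
    convert (hH (φ t)).hasFDerivAt.comp_hasDerivAt t (hasDerivAt_update_update hij x (hξ t))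
      using 1
    rw [map_add, map_smul, hpde, neg_smul, add_neg_cancel]
  calc H x = (H ∘ φ) (x i) := by rw [comp_apply, hφx]
    _ = (H ∘ φ) t :=
      is_const_of_deriv_eq_zero (fun t => (hderiv t).differentiableAt)
        (fun t => (hderiv t).deriv) _ t

theorem Fin.init_update_update_eq_snoc {m : ℕ} {γ : Type*} (x : Fin (m + 2) → γ) (t s : γ) :
    Fin.init (update (update x (Fin.last m).castSucc t) (Fin.last (m + 1)) s)
      = Fin.snoc (Fin.init (Fin.init x)) t := by
  rw [Fin.init_update_last, Fin.init_update_castSucc]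
  conv_lhs => rw [← Fin.snoc_init_self (q := Fin.init x)]
  exact Fin.update_snoc_last _ _ _

/-- Normal form of a C¹ function satisfying the linear first-order PDE
`∂_{n-1} H = (a x' · xₙ + b x') ∂ₙ H` (here `n = m + 2`): `H` is determined
by its values on the hyperplane `x_{n-1} = 0` via the linear ODE flow. -/
theorem pde_normal_form (m : ℕ)
    (H : (Fin (m + 2) → ℝ) → ℝ) (a b : (Fin (m + 1) → ℝ) → ℝ)
    (hH : ContDiff ℝ 1 H) (ha : Continuous a) (hb : Continuous b)
    (hpde : ∀ x : Fin (m + 2) → ℝ,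
      fderiv ℝ H x (Pi.single (⟨m, by omega⟩ : Fin (m + 2)) 1)
        = (a (fun i : Fin (m + 1) => x ⟨i, by omega⟩) * x ⟨m + 1, by omega⟩
           + b (fun i : Fin (m + 1) => x ⟨i, by omega⟩))
          * fderiv ℝ H x (Pi.single (⟨m + 1, by omega⟩ : Fin (m + 2)) 1)) :
    ∀ x : Fin (m + 2) → ℝ,
      H x = H (Function.update
        (Function.update x (⟨m, by omega⟩ : Fin (m + 2)) 0)
        (⟨m + 1, by omega⟩ : Fin (m + 2))
        (Real.exp (∫ t in (0:ℝ)..(x ⟨m, by omega⟩),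
            a (Fin.snoc (fun i : Fin m => x ⟨i, by omega⟩) t))
          * x ⟨m + 1, by omega⟩
          + ∫ t in (0:ℝ)..(x ⟨m, by omega⟩),
              b (Fin.snoc (fun i : Fin m => x ⟨i, by omega⟩) t)
                * Real.exp (∫ s in (0:ℝ)..t,
                    a (Fin.snoc (fun i : Fin m => x ⟨i, by omega⟩) s)))) := by
  intro x
  have hsnoc : Continuous (Fin.snoc (Fin.init (Fin.init x)) : ℝ → Fin (m + 1) → ℝ) := by
    fun_prop
  set α := fun t => a (Fin.snoc (Fin.init (Fin.init x)) t)
  set β := fun t => b (Fin.snoc (Fin.init (Fin.init x)) t)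
  -- `⟨m, _⟩` and `⟨m + 1, _⟩` are `(Fin.last m).castSucc` and `Fin.last (m + 1)` definitionally
  have hconst := apply_eq_apply_update_update_of_hasDerivAt (i := (Fin.last m).castSucc)
    (c := fun y => a (Fin.init y) * y (Fin.last (m + 1)) + b (Fin.init y))
    (hH.differentiable one_ne_zero) (Fin.castSucc_lt_last _).ne hpde x
    (fun t => by
      simpa only [Fin.init_update_update_eq_snoc, update_self]
        using hasDerivAt_linearFlow (α := α) (β := β) (ha.comp hsnoc) (hb.comp hsnoc) _ t)
    (linearFlow_eq α β _ _) 0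
  rwa [linearFlow_zero] at hconst
end

section
/- Let a, b : ℝ → ℝ be continuous and H : ℝ² → ℝ be continuously differentiable with ∂₁H(u,v) = (a(u)·v + b(u))·∂₂H(u,v) for all (u,v) ∈ ℝ². Then H(u,v) = H(0, exp(∫₀^u a) · v + ∫₀^u b(t) · exp(∫₀^t a) dt) for all (u,v). -/
/-!
Along the characteristic curves `s ↦ (s, φ s)` with `φ' = -(a φ + b)` the PDE says that the
derivative of `H` vanishes, so `H` is constant on them. With `A = ∫₀ a` and `B = ∫₀ b exp A`, the
solutions of this linear ODE are `φ s = exp (-A s) (w - B s)`; the one through `(u, v)` has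
`w = exp (A u) v + B u` and meets the line `u = 0` at `(0, w)`.
-/

open Real intervalIntegral

theorem apply_eq_of_fderiv_apply_hasDerivAt_eq_zero {E F : Type*}
    [NormedAddCommGroup E] [NormedSpace ℝ E] [NormedAddCommGroup F] [NormedSpace ℝ F]
    {H : E → F} {γ γ' : ℝ → E} (hH : Differentiable ℝ H) (hγ : ∀ s, HasDerivAt γ (γ' s) s)
    (hker : ∀ s, fderiv ℝ H (γ s) (γ' s) = 0) (x y : ℝ) : H (γ x) = H (γ y) := by
  have hderiv : ∀ s, HasDerivAt (H ∘ γ) 0 s := fun s => by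
    simpa only [hker s] using (hH (γ s)).hasFDerivAt.comp_hasDerivAt s (hγ s)
  exact is_const_of_deriv_eq_zero (fun s => (hderiv s).differentiableAt)
    (fun s => (hderiv s).deriv) x y

theorem ContinuousLinearMap.map_one_neg_eq_zero {F : Type*} [AddCommGroup F] [Module ℝ F]
    [TopologicalSpace F] {L : ℝ × ℝ →L[ℝ] F} {c : ℝ} (h : L (1, 0) = c • L (0, 1)) :
    L (1, -c) = 0 := by
  have hsplit : ((1 : ℝ), -c) = (1, 0) + (-c) • ((0 : ℝ), (1 : ℝ)) := by simp
  rw [hsplit, map_add, map_smul, h, neg_smul, add_neg_cancel]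

noncomputable def characteristic (A B : ℝ → ℝ) (w s : ℝ) : ℝ :=
  exp (-A s) * (w - B s)

theorem hasDerivAt_characteristic {A B a b : ℝ → ℝ} {s : ℝ} (w : ℝ)
    (hA : HasDerivAt A (a s) s) (hB : HasDerivAt B (b s * exp (A s)) s) :
    HasDerivAt (characteristic A B w) (-(a s * characteristic A B w s + b s)) s := by
  have hexp : exp (-A s) * exp (A s) = 1 := by rw [← exp_add, neg_add_cancel, exp_zero]
  refine (hA.neg.exp.mul ((hasDerivAt_const s w).sub hB)).congr_deriv ?_
  simp only [characteristic, Pi.neg_apply, Pi.sub_apply]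
  linear_combination (-b s) * hexp

theorem characteristic_eq (A B : ℝ → ℝ) (u v : ℝ) :
    characteristic A B (exp (A u) * v + B u) u = v := by
  simp only [characteristic, add_sub_cancel_right, ← mul_assoc, ← exp_add, neg_add_cancel,
    exp_zero, one_mul]

/-- Two-variable case of the PDE normal-form lemma. -/
theorem pde_normal_form_two_vars
    (H : ℝ × ℝ → ℝ) (a b : ℝ → ℝ)
    (hH : ContDiff ℝ 1 H) (ha : Continuous a) (hb : Continuous b)
    (hpde : ∀ u v : ℝ,
      fderiv ℝ H (u, v) (1, 0)
        = (a u * v + b u) * fderiv ℝ H (u, v) (0, 1)) :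
    ∀ u v : ℝ,
      H (u, v) = H (0,
        Real.exp (∫ t in (0:ℝ)..u, a t) * v
          + ∫ t in (0:ℝ)..u, b t * Real.exp (∫ s in (0:ℝ)..t, a s)) := by
  intro u v
  set A : ℝ → ℝ := fun x => ∫ t in (0:ℝ)..x, a t
  have hA : ∀ s, HasDerivAt A (a s) s := fun s => (ha.integral_hasStrictDerivAt 0 s).hasDerivAt
  have hbA : Continuous fun t => b t * exp (A t) :=
    hb.mul (continuous_exp.comp (continuous_iff_continuousAt.2 fun s => (hA s).continuousAt))
  set B : ℝ → ℝ := fun x => ∫ t in (0:ℝ)..x, b t * exp (A t)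
  have hB : ∀ s, HasDerivAt B (b s * exp (A s)) s :=
    fun s => (hbA.integral_hasStrictDerivAt 0 s).hasDerivAt
  set φ := characteristic A B (exp (A u) * v + B u)
  have hconst := apply_eq_of_fderiv_apply_hasDerivAt_eq_zero (γ := fun s => (s, φ s))
    (hH.differentiable one_ne_zero) (fun s => (hasDerivAt_id s).prodMk
      (hasDerivAt_characteristic _ (hA s) (hB s)))
    (fun s => ContinuousLinearMap.map_one_neg_eq_zero (hpde s (φ s))) u 0
  have hφ0 : φ 0 = exp (A u) * v + B u := by simp [φ, characteristic, A, B]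
  simpa only [φ, characteristic_eq, hφ0] using hconst
end

section
/- Let g : ℝⁿ → ℝ be continuously differentiable and suppose that for all ξ ∈ I and all γ ∈ ℝⁿ, 0 = Σ_{j=1}^n ∂_j g(γ₁,…,γₙ) · φ_j(ξ, γ₁,…,γ_{j-1}), where for some points ĉ₁,…,ĉ_{n-1} ∈ ℝ the functions φ₁, φ₂(·,ĉ₁), …, φₙ(·,ĉ₁,…,ĉ_{n-1}) are linearly independent on I. Then g is constant. -/
/-! Choose `ξ₀` with `φ₁(ξ₀) ≠ 0`. The vector field `V_{ξ₀} = (φ_j(ξ₀, ·))_j` is triangular, so its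
integral curves are obtained by successive quadratures (Picard iteration stabilizes after `n`
steps). `g` is constant along them, and they move the first coordinate at the constant speed
`φ₁(ξ₀)`, so every value of `g` is attained on the hyperplane `γ₁ = ĉ₁`. On that hyperplane `g` is
annihilated by the fields `φ₁(ξ₀) V_ξ - φ₁(ξ) V_{ξ₀}`, whose first component vanishes; they form a
hierarchical family in the remaining `n - 1` variables which is still independent at `ĉ`, so
induction on `n` applies. -/

variable {n : ℕ}

def IsHierarchical (W : (Fin n → ℝ) → Fin n → ℝ) : Prop :=
  ∀ j x y, (∀ i < j, x i = y i) → W x j = W y j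

namespace IsHierarchical

theorem apply_zero {W : (Fin (n + 1) → ℝ) → Fin (n + 1) → ℝ} (hW : IsHierarchical W)
    (x y : Fin (n + 1) → ℝ) : W x 0 = W y 0 :=
  hW 0 x y fun i hi => absurd hi (Fin.not_lt_zero i)

theorem smul_sub_smul {W W' : (Fin n → ℝ) → Fin n → ℝ} (hW : IsHierarchical W)
    (hW' : IsHierarchical W') (a b : ℝ) : IsHierarchical fun x => a • W x - b • W' x := by
  intro j x y h
  simp only [Pi.sub_apply, Pi.smul_apply, hW j x y h, hW' j x y h]

theorem tail_comp_cons {W : (Fin (n + 1) → ℝ) → Fin (n + 1) → ℝ} (hW : IsHierarchical W)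
    (a : ℝ) : IsHierarchical fun x => Fin.tail (W (Fin.cons a x)) := by
  intro j x y h
  refine hW j.succ _ _ fun i hi => ?_
  cases i using Fin.cases with
  | zero => rfl
  | succ i => exact h i (Fin.succ_lt_succ_iff.mp hi)

end IsHierarchical

noncomputable def picardIter (W : (Fin n → ℝ) → Fin n → ℝ) (x₀ : Fin n → ℝ) :
    ℕ → ℝ → Fin n → ℝ
  | 0 => fun _ => x₀
  | k + 1 => fun t => x₀ + ∫ s in (0 : ℝ)..t, W (picardIter W x₀ k s)

section picardIter

variable {W : (Fin n → ℝ) → Fin n → ℝ} {x₀ : Fin n → ℝ}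

theorem picardIter_apply_zero (k : ℕ) : picardIter W x₀ k 0 = x₀ := by
  cases k <;> simp [picardIter]

theorem continuous_picardIter (hW : Continuous W) (k : ℕ) : Continuous (picardIter W x₀ k) := by
  induction k with
  | zero => exact continuous_const
  | succ k ih =>
    exact continuous_const.add
      (intervalIntegral.continuous_primitive (fun a b => (hW.comp ih).intervalIntegrable a b) 0)

theorem hasDerivAt_picardIter_succ (hW : Continuous W) (k : ℕ) (t : ℝ) :
    HasDerivAt (picardIter W x₀ (k + 1)) (W (picardIter W x₀ k t)) t :=
  ((hW.comp (continuous_picardIter hW k)).integral_hasStrictDerivAt 0 t).hasDerivAt.const_add x₀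

theorem picardIter_succ_apply_of_lt (hW : Continuous W) (hWh : IsHierarchical W) (k : ℕ)
    (t : ℝ) (j : Fin n) (hj : (j : ℕ) < k) :
    picardIter W x₀ (k + 1) t j = picardIter W x₀ k t j := by
  induction k generalizing j t with
  | zero => exact absurd hj (Nat.not_lt_zero _)
  | succ k ih =>
    have hderiv : ∀ t, HasDerivAt (fun t => picardIter W x₀ (k + 2) t j -
        picardIter W x₀ (k + 1) t j) 0 t := fun t => by
      have hagree : W (picardIter W x₀ (k + 1) t) j = W (picardIter W x₀ k t) j :=
        hWh j _ _ fun i hi => ih t i (by omega)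
      have h := (hasDerivAt_pi.mp (hasDerivAt_picardIter_succ (x₀ := x₀) hW (k + 1) t) j).sub
        (hasDerivAt_pi.mp (hasDerivAt_picardIter_succ (x₀ := x₀) hW k t) j)
      rwa [hagree, sub_self] at h
    have := is_const_of_deriv_eq_zero (fun t => (hderiv t).differentiableAt)
      (fun t => (hderiv t).deriv) t 0
    simpa [picardIter_apply_zero, sub_eq_zero] using this

end picardIter

theorem IsHierarchical.exists_hasDerivAt {W : (Fin n → ℝ) → Fin n → ℝ} (hWh : IsHierarchical W)
    (hW : Continuous W) (x₀ : Fin n → ℝ) :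
    ∃ Γ : ℝ → Fin n → ℝ, Γ 0 = x₀ ∧ ∀ t, HasDerivAt Γ (W (Γ t)) t := by
  have hfix : picardIter W x₀ (n + 1) = picardIter W x₀ n :=
    funext fun t => funext fun j => picardIter_succ_apply_of_lt hW hWh n t j j.isLt
  refine ⟨picardIter W x₀ n, picardIter_apply_zero n, fun t => ?_⟩
  simpa only [hfix] using hasDerivAt_picardIter_succ (x₀ := x₀) hW n t

theorem apply_eq_of_hasDerivAt_of_fderiv_eq_zero {E F : Type*} [NormedAddCommGroup E]
    [NormedSpace ℝ E] [NormedAddCommGroup F] [NormedSpace ℝ F] {W : E → E} {Γ : ℝ → E}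
    (hΓ : ∀ t, HasDerivAt Γ (W (Γ t)) t) {g : E → F} (hg : Differentiable ℝ g)
    (hann : ∀ x, fderiv ℝ g x (W x) = 0) (s t : ℝ) : g (Γ s) = g (Γ t) := by
  have hderiv : ∀ t, HasDerivAt (g ∘ Γ) 0 t := fun t => by
    simpa only [hann] using (hg (Γ t)).hasFDerivAt.comp_hasDerivAt t (hΓ t)
  exact is_const_of_deriv_eq_zero (fun t => (hderiv t).differentiableAt)
    (fun t => (hderiv t).deriv) s t

theorem IsHierarchical.exists_apply_zero_eq_of_fderiv_eq_zero
    {W : (Fin (n + 1) → ℝ) → Fin (n + 1) → ℝ} (hWh : IsHierarchical W) (hW : Continuous W)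
    {g : (Fin (n + 1) → ℝ) → ℝ} (hg : Differentiable ℝ g) (hann : ∀ x, fderiv ℝ g x (W x) = 0)
    {x₀ : Fin (n + 1) → ℝ} (hx₀ : W x₀ 0 ≠ 0) (a : ℝ) : ∃ x, x 0 = a ∧ g x = g x₀ := by
  obtain ⟨Γ, hΓ₀, hΓ⟩ := hWh.exists_hasDerivAt hW x₀
  have hlinear : ∀ t, Γ t 0 = x₀ 0 + t * W x₀ 0 := by
    have hderiv : ∀ t, HasDerivAt (fun t => Γ t 0 - t * W x₀ 0) 0 t := fun t => by
      have h := (hasDerivAt_pi.mp (hΓ t) 0).sub (hasDerivAt_mul_const (W x₀ 0))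
      rwa [hWh.apply_zero (Γ t) x₀, sub_self] at h
    intro t
    have := is_const_of_deriv_eq_zero (fun t => (hderiv t).differentiableAt)
      (fun t => (hderiv t).deriv) t 0
    simp only [hΓ₀, zero_mul, sub_zero] at this
    linarith
  refine ⟨Γ ((a - x₀ 0) / W x₀ 0), ?_, ?_⟩
  · rw [hlinear]
    field_simp
    ring
  · rw [apply_eq_of_hasDerivAt_of_fderiv_eq_zero hΓ hg hann _ 0, hΓ₀]

theorem fderiv_comp_finCons_apply_tail {g : (Fin (n + 1) → ℝ) → ℝ} (hg : Differentiable ℝ g)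
    {u : Fin (n + 1) → ℝ} (hu : u 0 = 0) (a : ℝ) (x : Fin n → ℝ) :
    fderiv ℝ (fun x => g (Fin.cons a x)) x (Fin.tail u) = fderiv ℝ g (Fin.cons a x) u := by
  have hcons : HasFDerivAt (fun x : Fin n → ℝ => (Fin.cons a x : Fin (n + 1) → ℝ))
      ((0 : (Fin n → ℝ) →L[ℝ] ℝ).finCons (ContinuousLinearMap.id ℝ _)) x :=
    (hasFDerivAt_const a x).finCons (hasFDerivAt_id x)
  have hcomp : HasFDerivAt (fun x => g (Fin.cons a x))
      ((fderiv ℝ g (Fin.cons a x)).comp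
        ((0 : (Fin n → ℝ) →L[ℝ] ℝ).finCons (ContinuousLinearMap.id ℝ _))) x :=
    (hg _).hasFDerivAt.comp x hcons
  rw [hcomp.fderiv, ContinuousLinearMap.comp_apply, ← Fin.cons_self_tail u, hu]
  rfl

theorem LinearIndependent.smul_succ_sub_smul_zero {K M : Type*} [Field K] [AddCommGroup M]
    [Module K M] {f : Fin (n + 1) → M} (hf : LinearIndependent K f) (ℓ : M →ₗ[K] K)
    (h0 : ℓ (f 0) ≠ 0) :
    LinearIndependent K fun k : Fin n => ℓ (f 0) • f k.succ - ℓ (f k.succ) • f 0 := by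
  rw [Fintype.linearIndependent_iff] at hf ⊢
  intro d hd k
  have hrel := hf (Fin.cons (-∑ k, d k * ℓ (f k.succ)) fun k => ℓ (f 0) * d k) (by
    rw [Fin.sum_univ_succ, ← hd]
    simp only [Fin.cons_zero, Fin.cons_succ, neg_smul, smul_sub, Finset.sum_smul, mul_smul,
      smul_comm (d _), Finset.sum_sub_distrib]
    abel)
  simpa [h0] using hrel k.succ

theorem apply_eq_of_fderiv_hierarchical_eq_zero {P : Type*} {V : P → (Fin n → ℝ) → Fin n → ℝ}
    (hVh : ∀ p, IsHierarchical (V p)) (hV : ∀ p, Continuous (V p)) {g : (Fin n → ℝ) → ℝ}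
    (hg : Differentiable ℝ g) (hann : ∀ p x, fderiv ℝ g x (V p x) = 0) {c : Fin n → ℝ}
    (hc : LinearIndependent ℝ fun j p => V p c j) (x y : Fin n → ℝ) : g x = g y := by
  induction n with
  | zero => rw [Subsingleton.elim x y]
  | succ n ih =>
    obtain ⟨p₀, hp₀⟩ : ∃ p₀, V p₀ c 0 ≠ 0 := Function.ne_iff.mp (hc.ne_zero 0)
    set U : P → (Fin (n + 1) → ℝ) → Fin (n + 1) → ℝ :=
      fun p x => V p₀ c 0 • V p x - V p c 0 • V p₀ x
    have hU0 : ∀ p x, U p x 0 = 0 := fun p x => by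
      simp only [U, Pi.sub_apply, Pi.smul_apply, smul_eq_mul, (hVh p).apply_zero x c,
        (hVh p₀).apply_zero x c]
      ring
    have hUann : ∀ p x, fderiv ℝ g x (U p x) = 0 := by simp [U, hann]
    have hUind : LinearIndependent ℝ fun k p => Fin.tail (U p (Fin.cons (c 0) (Fin.tail c))) k := by
      have hfam : (fun k p => Fin.tail (U p (Fin.cons (c 0) (Fin.tail c))) k) =
          fun k => V p₀ c 0 • (fun p => V p c k.succ) - V p₀ c k.succ • fun p => V p c 0 := by
        ext k p
        simp only [U, Fin.tail, Fin.cons_self_tail, Pi.sub_apply, Pi.smul_apply, smul_eq_mul]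
        ring
      rw [hfam]
      exact hc.smul_succ_sub_smul_zero (LinearMap.proj p₀) hp₀
    have hplane : ∀ β β', g (Fin.cons (c 0) β) = g (Fin.cons (c 0) β') :=
      ih (fun p => ((hVh p).smul_sub_smul (hVh p₀) _ _).tail_comp_cons _) (fun p => by fun_prop)
        (hg.comp (by fun_prop))
        (fun p β => by rw [fderiv_comp_finCons_apply_tail hg (hU0 _ _), hUann]) hUind
    obtain ⟨x', hx'0, hx'⟩ := (hVh p₀).exists_apply_zero_eq_of_fderiv_eq_zero (hV p₀) hg
      (hann p₀) ((hVh p₀).apply_zero x c ▸ hp₀) (c 0)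
    obtain ⟨y', hy'0, hy'⟩ := (hVh p₀).exists_apply_zero_eq_of_fderiv_eq_zero (hV p₀) hg
      (hann p₀) ((hVh p₀).apply_zero y c ▸ hp₀) (c 0)
    rw [← hx', ← hy', ← Fin.cons_self_tail x', ← Fin.cons_self_tail y', hx'0, hy'0]
    exact hplane _ _

theorem annihilated_by_hierarchical_family_constant_general
    (n : ℕ) (I : Set ℝ)
    (φ : Fin n → ℝ → (Fin n → ℝ) → ℝ)
    (hcont : ∀ j : Fin n, Continuous (fun p : ℝ × (Fin n → ℝ) => φ j p.1 p.2))
    (hhier : ∀ j : Fin n, ∀ t : ℝ, ∀ γ γ' : Fin n → ℝ,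
      (∀ i : Fin n, (i : ℕ) < (j : ℕ) → γ i = γ' i) → φ j t γ = φ j t γ')
    (g : (Fin n → ℝ) → ℝ) (hg : ContDiff ℝ 1 g)
    (hann : ∀ ξ ∈ I, ∀ γ : Fin n → ℝ,
      (∑ j : Fin n, fderiv ℝ g γ (Pi.single j 1) * φ j ξ γ) = 0)
    (hindep : ∃ chat : Fin n → ℝ,
      LinearIndependent ℝ (fun j : Fin n => I.restrict (fun x => φ j x chat))) :
    ∀ γ γ' : Fin n → ℝ, g γ = g γ' := by
  obtain ⟨chat, hchat⟩ := hindep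
  refine apply_eq_of_fderiv_hierarchical_eq_zero (P := I) (V := fun ξ γ j => φ j ξ γ)
    (fun ξ j γ γ' h => hhier j ξ γ γ' h)
    (fun ξ => continuous_pi fun j => (hcont j).comp (Continuous.prodMk_right _))
    (hg.differentiable one_ne_zero) (fun ξ γ => ?_) hchat
  rw [pi_eq_sum_univ' fun j => φ j ξ γ, map_sum]
  simpa [mul_comm] using hann ξ ξ.2 γ

/-- Infinitesimal version of the quadrature-invariance lemma: a C¹ function
annihilated by an independent hierarchical family of directions is constant. -/
theorem annihilated_by_hierarchical_family_constant
    (n : ℕ) (I : Set ℝ) (hI : I.OrdConnected)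
    (φ : Fin n → ℝ → (Fin n → ℝ) → ℝ)
    (hcont : ∀ j : Fin n, Continuous (fun p : ℝ × (Fin n → ℝ) => φ j p.1 p.2))
    (hhier : ∀ j : Fin n, ∀ t : ℝ, ∀ γ γ' : Fin n → ℝ,
      (∀ i : Fin n, (i : ℕ) < (j : ℕ) → γ i = γ' i) → φ j t γ = φ j t γ')
    (g : (Fin n → ℝ) → ℝ) (hg : ContDiff ℝ 1 g)
    (hann : ∀ ξ ∈ I, ∀ γ : Fin n → ℝ,
      (∑ j : Fin n, fderiv ℝ g γ (Pi.single j 1) * φ j ξ γ) = 0)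
    (hindep : ∃ chat : Fin n → ℝ,
      LinearIndependent ℝ (fun j : Fin n => I.restrict (fun x => φ j x chat))) :
    ∀ γ γ' : Fin n → ℝ, g γ = g γ' :=
  annihilated_by_hierarchical_family_constant_general n I φ hcont hhier g hg hann hindep
end

section
/- Let g : ℝ² → ℝ be continuously differentiable and suppose ∂₁g(γ₁,γ₂)·φ₁(ξ) + ∂₂g(γ₁,γ₂)·φ₂(ξ,γ₁) = 0 for all ξ ∈ I, γ₁, γ₂ ∈ ℝ, where φ₁ : I → ℝ and φ₂ : I × ℝ → ℝ are continuous and there exists ĉ₁ ∈ ℝ with φ₁ and φ₂(·, ĉ₁) linearly independent on I. Then g is constant. -/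
/-!
At a point `ξ₀ ∈ I` with `φ₁ ξ₀ ≠ 0`, the hypothesis says that the derivative of `g` along the
vector field `(1, μ γ₁)`, `μ = φ₂ ξ₀ · / φ₁ ξ₀`, vanishes, so `g` is constant along the
characteristic curves `γ₂ = y + ∫ μ`; each of them meets the vertical line `γ₁ = c₁`. On that line
linear independence of `φ₁` and `φ₂(·, c₁)` forces the whole gradient of `g` to vanish, so `g` is
constant there, hence everywhere.
-/

theorem apply_comp_eq_of_fderiv_apply_eq_zero {E F : Type*} [NormedAddCommGroup E]
    [NormedSpace ℝ E] [NormedAddCommGroup F] [NormedSpace ℝ F] {g : E → F}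
    (hg : Differentiable ℝ g) {γ γ' : ℝ → E} (hγ : ∀ t, HasDerivAt γ (γ' t) t)
    (hzero : ∀ t, fderiv ℝ g (γ t) (γ' t) = 0) (s t : ℝ) :
    g (γ s) = g (γ t) := by
  have hderiv : ∀ t, HasDerivAt (g ∘ γ) 0 t := fun t =>
    hzero t ▸ (hg (γ t)).hasFDerivAt.comp_hasDerivAt t (hγ t)
  exact is_const_of_deriv_eq_zero (fun t => (hderiv t).differentiableAt)
    (fun t => (hderiv t).deriv) s t

theorem ContinuousLinearMap.apply_prod_eq (L : ℝ × ℝ →L[ℝ] ℝ) (a b : ℝ) :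
    L (a, b) = a * L (1, 0) + b * L (0, 1) := by
  have hab : ((a, b) : ℝ × ℝ) = a • ((1 : ℝ), (0 : ℝ)) + b • ((0 : ℝ), (1 : ℝ)) := by
    simp
  rw [hab, map_add, map_smul, map_smul, smul_eq_mul, smul_eq_mul]

theorem apply_eq_apply_along_characteristic {g : ℝ × ℝ → ℝ} (hg : Differentiable ℝ g)
    {μ : ℝ → ℝ} (hμ : Continuous μ) (hzero : ∀ x y, fderiv ℝ g (x, y) (1, μ x) = 0)
    (x y x' : ℝ) : g (x, y) = g (x', y + ∫ t in x..x', μ t) := by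
  have hγ : ∀ t, HasDerivAt (fun t => ((t, y + ∫ s in x..t, μ s) : ℝ × ℝ)) (1, μ t) t :=
    fun t => (hasDerivAt_id t).prodMk ((hμ.integral_hasStrictDerivAt x t).hasDerivAt.const_add y)
  simpa using apply_comp_eq_of_fderiv_apply_eq_zero hg hγ (fun t => hzero _ _) x x'

theorem apply_eq_apply_of_fderiv_apply_eq_zero_line {g : ℝ × ℝ → ℝ} (hg : Differentiable ℝ g)
    {c : ℝ} (hzero : ∀ y, fderiv ℝ g (c, y) (0, 1) = 0) (y y' : ℝ) : g (c, y) = g (c, y') :=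
  apply_comp_eq_of_fderiv_apply_eq_zero hg
    (fun t => (hasDerivAt_const t c).prodMk (hasDerivAt_id t)) hzero y y'

theorem annihilated_two_vars_constant_general
    (I : Set ℝ)
    (φ₁ : ℝ → ℝ) (φ₂ : ℝ → ℝ → ℝ)
    (hφ₂ : Continuous (fun p : ℝ × ℝ => φ₂ p.1 p.2))
    (g : ℝ × ℝ → ℝ) (hg : ContDiff ℝ 1 g)
    (hann : ∀ ξ ∈ I, ∀ γ₁ γ₂ : ℝ,
      fderiv ℝ g (γ₁, γ₂) (1, 0) * φ₁ ξ
        + fderiv ℝ g (γ₁, γ₂) (0, 1) * φ₂ ξ γ₁ = 0)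
    (hindep : ∃ c₁ : ℝ, LinearIndependent ℝ
      ![I.restrict φ₁, I.restrict (fun x => φ₂ x c₁)]) :
    ∀ p q : ℝ × ℝ, g p = g q := by
  obtain ⟨c₁, hli⟩ := hindep
  have hgd : Differentiable ℝ g := hg.differentiable one_ne_zero
  obtain ⟨ξ₀, hξ₀, hφ₁ξ₀⟩ : ∃ ξ ∈ I, φ₁ ξ ≠ 0 := by
    by_contra! h
    exact hli.ne_zero 0 (funext fun x => h x x.2)
  have hline : ∀ y, fderiv ℝ g (c₁, y) (0, 1) = 0 := fun y =>
    (hli.eq_zero_of_pair (s := fderiv ℝ g (c₁, y) (1, 0)) (funext fun x =>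
      show _ * φ₁ x + _ * φ₂ x c₁ = 0 by linarith [hann x x.2 c₁ y])).2
  set μ : ℝ → ℝ := fun x => φ₂ ξ₀ x / φ₁ ξ₀
  have hμ : Continuous μ := (hφ₂.comp (continuous_const.prodMk continuous_id)).div_const _
  have hchar : ∀ x y, fderiv ℝ g (x, y) (1, μ x) = 0 := fun x y => by
    rw [ContinuousLinearMap.apply_prod_eq]
    simp only [μ]
    field_simp
    linarith [hann ξ₀ hξ₀ x y]
  have hbase : ∀ p : ℝ × ℝ, g p = g (c₁, 0) := fun p =>
    (apply_eq_apply_along_characteristic hgd hμ hchar p.1 p.2 c₁).trans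
      (apply_eq_apply_of_fderiv_apply_eq_zero_line hgd hline _ 0)
  exact fun p q => (hbase p).trans (hbase q).symm

/-- Two-variable case of the independence lemma. -/
theorem annihilated_two_vars_constant
    (I : Set ℝ) (hI : I.OrdConnected)
    (φ₁ : ℝ → ℝ) (φ₂ : ℝ → ℝ → ℝ)
    (hφ₁ : Continuous φ₁)
    (hφ₂ : Continuous (fun p : ℝ × ℝ => φ₂ p.1 p.2))
    (g : ℝ × ℝ → ℝ) (hg : ContDiff ℝ 1 g)
    (hann : ∀ ξ ∈ I, ∀ γ₁ γ₂ : ℝ,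
      fderiv ℝ g (γ₁, γ₂) (1, 0) * φ₁ ξ
        + fderiv ℝ g (γ₁, γ₂) (0, 1) * φ₂ ξ γ₁ = 0)
    (hindep : ∃ c₁ : ℝ, LinearIndependent ℝ
      ![I.restrict φ₁, I.restrict (fun x => φ₂ x c₁)]) :
    ∀ p q : ℝ × ℝ, g p = g q :=
  annihilated_two_vars_constant_general I φ₁ φ₂ hφ₂ g hg hann hindep
end

section
/- Suppose Q : I → ℝ is continuous and there exist a C² function φ : ℝ → ℝ with φ' nowhere zero and continuous functions p, q : I → ℝ such that for every solution θ : I → ℝ of θ' = cos²θ + Q·sin²θ, the function φ∘θ satisfies (φ∘θ)' + p·(φ∘θ) = q on I. Then Q is constant. -/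
/-!
Along the solution `θ` with `θ x = y`, the chain rule turns the linear equation into the identity
`φ' y * (cos y ^ 2 + Q x * sin y ^ 2) = q x - p x * φ y`, valid for all `x ∈ I` and all `y`.
At `y = 0` and `y = π` the bracket is `1`, and `φ 0 ≠ φ π` by Rolle, so `p x` and then `q x` do
not depend on `x`; at `y = π / 2` the bracket is `Q x` and `φ' (π / 2) ≠ 0`, so neither does `Q x`.

Solutions through every point exist because the Prüfer field is Lipschitz in `θ` uniformly on
compact subintervals. Since the hypothesis asks for two-sided derivatives, `Q` is first extended by
a constant beyond each endpoint that `I` contains.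
-/

open Real Set Filter Topology
open scoped NNReal

namespace Set.OrdConnected

variable {α β : Type*} [TopologicalSpace α] [LinearOrder α] [OrderClosedTopology α]
  [TopologicalSpace β] {I : Set α} {Q : α → β}

theorem exists_continuousOn_extension_mem_nhdsGE (hI : I.OrdConnected) (hQ : ContinuousOn Q I) :
    ∃ J : Set α, ∃ Q' : α → β, J.OrdConnected ∧ ContinuousOn Q' J ∧ EqOn Q' Q I ∧
      ∀ x ∈ I, J ∈ 𝓝[≥] x := by
  by_cases hgreatest : ∃ b, IsGreatest I b
  · obtain ⟨b, hbI, hb⟩ := hgreatest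
    refine ⟨(min · b) ⁻¹' I, Q ∘ (min · b), hI.preimage_mono fun _ _ h ↦ min_le_min_right b h,
      hQ.comp (continuous_id.min continuous_const).continuousOn fun _ h ↦ h,
      fun x hx ↦ by simp [min_eq_left (hb hx)], fun x hx ↦ mem_of_superset self_mem_nhdsWithin ?_⟩
    intro y hy
    exact hI.out hx hbI ⟨le_min hy (hb hx), min_le_right y b⟩
  · refine ⟨I, Q, hI, hQ, fun _ _ ↦ rfl, fun x hx ↦ ?_⟩
    obtain ⟨y, hy, hxy⟩ : ∃ y ∈ I, x < y := by
      by_contra! h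
      exact hgreatest ⟨x, hx, h⟩
    exact hI.mem_nhdsGE hx hy hxy

theorem exists_continuousOn_extension_mem_nhds (hI : I.OrdConnected) (hQ : ContinuousOn Q I) :
    ∃ J : Set α, ∃ Q' : α → β, J.OrdConnected ∧ ContinuousOn Q' J ∧ EqOn Q' Q I ∧
      ∀ x ∈ I, J ∈ 𝓝 x := by
  obtain ⟨J₁, Q₁, hJ₁, hQ₁, hQ₁I, hJ₁I⟩ := hI.exists_continuousOn_extension_mem_nhdsGE hQ
  obtain ⟨J, Q', hJ, hQ', hQ'J₁, hJJ₁⟩ :=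
    hJ₁.dual.exists_continuousOn_extension_mem_nhdsGE (α := αᵒᵈ) hQ₁
  have hIJ₁ : I ⊆ J₁ := fun x hx ↦ mem_of_mem_nhdsWithin self_mem_Ici (hJ₁I x hx)
  have hJ₁J : J₁ ⊆ J := fun x hx ↦ mem_of_mem_nhdsWithin self_mem_Iic (hJJ₁ x hx)
  refine ⟨J, Q', hJ.dual, hQ', fun x hx ↦ (hQ'J₁ (hIJ₁ hx)).trans (hQ₁I hx), fun x hx ↦ ?_⟩
  rw [← nhdsLE_sup_nhdsGE]
  exact ⟨hJJ₁ x (hIJ₁ hx), mem_of_superset (hJ₁I x hx) hJ₁J⟩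

end Set.OrdConnected

section ODE

variable {E : Type*} [NormedAddCommGroup E] {v : ℝ → E → E} {a b t₀ : ℝ}

theorem Set.OrdConnected.exists_bound_lipschitzWith_Icc {J : Set ℝ} (hJ : J.OrdConnected)
    {B : ℝ → ℝ≥0} (hB : ContinuousOn B J) (hvB : ∀ t ∈ J, ∀ x, ‖v t x‖ ≤ B t)
    (hlip : ∀ t ∈ J, LipschitzWith (B t) (v t)) (ha : a ∈ J) (hb : b ∈ J) :
    ∃ K : ℝ≥0, (∀ t ∈ Icc a b, ∀ x, ‖v t x‖ ≤ K) ∧ ∀ t ∈ Icc a b, LipschitzWith K (v t) := by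
  obtain ⟨K, hK⟩ := isCompact_Icc.bddAbove_image (hB.mono (hJ.out ha hb))
  refine ⟨K, fun t ht x ↦ ?_, fun t ht ↦ (hlip t (hJ.out ha hb ht)).weaken (hK ⟨t, ht, rfl⟩)⟩
  exact (hvB t (hJ.out ha hb ht) x).trans (NNReal.coe_le_coe.2 (hK ⟨t, ht, rfl⟩))

variable [NormedSpace ℝ E]

theorem exists_isIntegralCurveOn_Icc [CompleteSpace E] {C K : ℝ≥0} (ht₀ : t₀ ∈ Icc a b)
    (hcont : ∀ x, ContinuousOn (v · x) (Icc a b)) (hC : ∀ t ∈ Icc a b, ∀ x, ‖v t x‖ ≤ C)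
    (hK : ∀ t ∈ Icc a b, LipschitzWith K (v t)) (x₀ : E) :
    ∃ γ : ℝ → E, γ t₀ = x₀ ∧ IsIntegralCurveOn γ v (Icc a b) := by
  have hT : 0 ≤ max (b - t₀) (t₀ - a) := le_max_of_le_left (sub_nonneg.2 ht₀.2)
  have hv : IsPicardLindelof v (tmin := a) (tmax := b) ⟨t₀, ht₀⟩ x₀
      (C * (max (b - t₀) (t₀ - a)).toNNReal) 0 C K :=
    { lipschitzOnWith := fun t ht ↦ (hK t ht).lipschitzOnWith
      continuousOn := fun x _ ↦ hcont x
      norm_le := fun t ht x _ ↦ hC t ht x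
      mul_max_le := by simp [Real.coe_toNNReal _ hT] }
  exact hv.exists_eq_forall_mem_Icc_hasDerivWithinAt₀

theorem IsIntegralCurveOn.eqOn_Icc {f g : ℝ → E} {K : ℝ≥0}
    (hK : ∀ t ∈ Icc a b, LipschitzWith K (v t)) (hf : IsIntegralCurveOn f v (Icc a b))
    (hg : IsIntegralCurveOn g v (Icc a b)) (ht₀ : t₀ ∈ Icc a b) (heq : f t₀ = g t₀) :
    EqOn f g (Icc a b) := by
  have hleft : ∀ {γ}, IsIntegralCurveOn γ v (Icc a b) →
      ∀ t ∈ Ioc a t₀, HasDerivWithinAt γ (v t (γ t)) (Iic t) t := fun hγ t ht ↦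
    (hγ t ⟨ht.1.le, ht.2.trans ht₀.2⟩).mono_of_mem_nhdsWithin
      (Icc_mem_nhdsLE_of_mem ⟨ht.1, ht.2.trans ht₀.2⟩)
  have hright : ∀ {γ}, IsIntegralCurveOn γ v (Icc a b) →
      ∀ t ∈ Ico t₀ b, HasDerivWithinAt γ (v t (γ t)) (Ici t) t := fun hγ t ht ↦
    (hγ t ⟨ht₀.1.trans ht.1, ht.2.le⟩).mono_of_mem_nhdsWithin
      (Icc_mem_nhdsGE_of_mem ⟨ht₀.1.trans ht.1, ht.2⟩)
  rw [← Icc_union_Icc_eq_Icc ht₀.1 ht₀.2]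
  refine EqOn.union ?_ ?_
  · exact ODE_solution_unique_of_mem_Icc_left (s := fun _ ↦ univ)
      (fun t ht ↦ (hK t ⟨ht.1.le, ht.2.trans ht₀.2⟩).lipschitzOnWith)
      (hf.continuousOn.mono (Icc_subset_Icc_right ht₀.2)) (hleft hf) (fun _ _ ↦ trivial)
      (hg.continuousOn.mono (Icc_subset_Icc_right ht₀.2)) (hleft hg) (fun _ _ ↦ trivial) heq
  · exact ODE_solution_unique_of_mem_Icc_right (s := fun _ ↦ univ)
      (fun t ht ↦ (hK t ⟨ht₀.1.trans ht.1, ht.2.le⟩).lipschitzOnWith)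
      (hf.continuousOn.mono (Icc_subset_Icc_left ht₀.1)) (hright hf) (fun _ _ ↦ trivial)
      (hg.continuousOn.mono (Icc_subset_Icc_left ht₀.1)) (hright hg) (fun _ _ ↦ trivial) heq

theorem Set.OrdConnected.exists_hasDerivAt_of_lipschitzWith [CompleteSpace E] {J : Set ℝ}
    (hJ : J.OrdConnected) {B : ℝ → ℝ≥0} (hB : ContinuousOn B J)
    (hcont : ∀ x, ContinuousOn (v · x) J) (hvB : ∀ t ∈ J, ∀ x, ‖v t x‖ ≤ B t)
    (hlip : ∀ t ∈ J, LipschitzWith (B t) (v t)) (ht₀ : t₀ ∈ J) (x₀ : E) :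
    ∃ γ : ℝ → E, γ t₀ = x₀ ∧ ∀ t, J ∈ 𝓝 t → HasDerivAt γ (v t (γ t)) t := by
  have hex : ∀ {a b}, a ∈ J → b ∈ J → t₀ ∈ Icc a b →
      ∃ γ : ℝ → E, γ t₀ = x₀ ∧ IsIntegralCurveOn γ v (Icc a b) := by
    intro a b ha hb hab
    obtain ⟨K, hvK, hK⟩ := hJ.exists_bound_lipschitzWith_Icc hB hvB hlip ha hb
    exact exists_isIntegralCurveOn_Icc hab (fun x ↦ (hcont x).mono (hJ.out ha hb)) hvK hK x₀
  have hmin : ∀ {s}, s ∈ J → min s t₀ ∈ J := fun hs ↦ min_rec' (· ∈ J) hs ht₀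
  have hmax : ∀ {s}, s ∈ J → max s t₀ ∈ J := fun hs ↦ max_rec' (· ∈ J) hs ht₀
  -- `γ s` solves the equation between `s` and `t₀`; uniqueness makes `s ↦ γ s s` one solution.
  choose! γ hγ₀ hγ using fun s (hs : s ∈ J) ↦
    hex (hmin hs) (hmax hs) ⟨min_le_right s t₀, le_max_right s t₀⟩
  have hglue : ∀ {a b}, a ∈ J → b ∈ J → t₀ ∈ Icc a b → ∀ {g : ℝ → E}, g t₀ = x₀ →
      IsIntegralCurveOn g v (Icc a b) → EqOn (fun s ↦ γ s s) g (Icc a b) := by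
    intro a b ha hb hab g hg₀ hg s hs
    have hsJ : s ∈ J := hJ.out ha hb hs
    obtain ⟨K, -, hK⟩ := hJ.exists_bound_lipschitzWith_Icc hB hvB hlip (hmin hsJ) (hmax hsJ)
    exact (hγ s hsJ).eqOn_Icc hK
      (hg.mono (Icc_subset_Icc (le_min hs.1 hab.1) (max_le hs.2 hab.2)))
      ⟨min_le_right s t₀, le_max_right s t₀⟩ ((hγ₀ s hsJ).trans hg₀.symm)
      ⟨min_le_left s t₀, le_max_left s t₀⟩
  refine ⟨fun s ↦ γ s s, hγ₀ t₀ ht₀, fun t ht ↦ ?_⟩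
  obtain ⟨l, u, htlu, hlu, hluJ⟩ := exists_Icc_mem_subset_of_mem_nhds ht
  have hlJ : l ∈ J := hluJ ⟨le_rfl, htlu.1.trans htlu.2⟩
  have huJ : u ∈ J := hluJ ⟨htlu.1.trans htlu.2, le_rfl⟩
  have hN : Icc (min l t₀) (max u t₀) ∈ 𝓝 t :=
    mem_of_superset hlu (Icc_subset_Icc (min_le_left l t₀) (le_max_left u t₀))
  obtain ⟨g, hg₀, hg⟩ := hex (hmin hlJ) (hmax huJ) ⟨min_le_right l t₀, le_max_right u t₀⟩
  have heq := hglue (hmin hlJ) (hmax huJ) ⟨min_le_right l t₀, le_max_right u t₀⟩ hg₀ hg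
  rw [heq (mem_of_mem_nhds hN)]
  exact ((hg t (mem_of_mem_nhds hN)).hasDerivAt hN).congr_of_eventuallyEq
    (eventuallyEq_of_mem hN heq)

end ODE

noncomputable def pruferField (Q : ℝ → ℝ) (t θ : ℝ) : ℝ := cos θ ^ 2 + Q t * sin θ ^ 2

section Prufer

variable {Q : ℝ → ℝ}

@[simp] theorem pruferField_zero (t : ℝ) : pruferField Q t 0 = 1 := by simp [pruferField]

@[simp] theorem pruferField_pi (t : ℝ) : pruferField Q t π = 1 := by simp [pruferField]

@[simp] theorem pruferField_pi_div_two (t : ℝ) : pruferField Q t (π / 2) = Q t := by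
  simp [pruferField]

theorem hasDerivAt_pruferField (t θ : ℝ) :
    HasDerivAt (pruferField Q t) ((Q t - 1) * sin (2 * θ)) θ := by
  have h : HasDerivAt (fun y ↦ cos y ^ 2 + Q t * sin y ^ 2) _ θ :=
    ((hasDerivAt_cos θ).pow 2).add (((hasDerivAt_sin θ).pow 2).const_mul (Q t))
  refine h.congr_deriv ?_
  rw [sin_two_mul]
  push_cast
  ring

theorem norm_pruferField_le (t θ : ℝ) : ‖pruferField Q t θ‖ ≤ ↑(1 + ‖Q t‖₊) := by
  rw [NNReal.coe_add, NNReal.coe_one, coe_nnnorm, norm_eq_abs, norm_eq_abs, pruferField]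
  calc |cos θ ^ 2 + Q t * sin θ ^ 2| ≤ |cos θ ^ 2| + |Q t * sin θ ^ 2| := abs_add_le _ _
    _ = cos θ ^ 2 + |Q t| * sin θ ^ 2 := by rw [abs_mul, abs_sq, abs_sq]
    _ ≤ 1 + |Q t| := by nlinarith [cos_sq_le_one θ, sin_sq_le_one θ, abs_nonneg (Q t)]

theorem lipschitzWith_pruferField (t : ℝ) : LipschitzWith (1 + ‖Q t‖₊) (pruferField Q t) := by
  refine lipschitzWith_of_nnnorm_deriv_le (fun θ ↦ (hasDerivAt_pruferField t θ).differentiableAt)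
    fun θ ↦ ?_
  rw [← NNReal.coe_le_coe, coe_nnnorm, (hasDerivAt_pruferField t θ).deriv, NNReal.coe_add,
    NNReal.coe_one, coe_nnnorm, norm_mul, norm_eq_abs, norm_eq_abs, norm_eq_abs]
  calc |Q t - 1| * |sin (2 * θ)| ≤ |Q t - 1| * 1 :=
        mul_le_mul_of_nonneg_left (abs_sin_le_one _) (abs_nonneg _)
    _ ≤ 1 + |Q t| := by linarith [abs_sub (Q t) 1, (abs_one : |(1 : ℝ)| = 1)]

end Prufer

theorem exists_pruferField_solution {I : Set ℝ} (hI : I.OrdConnected) {Q : ℝ → ℝ}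
    (hQ : ContinuousOn Q I) {x₀ : ℝ} (hx₀ : x₀ ∈ I) (y₀ : ℝ) :
    ∃ θ : ℝ → ℝ, θ x₀ = y₀ ∧ ∀ x ∈ I, HasDerivAt θ (pruferField Q x (θ x)) x := by
  obtain ⟨J, Q', hJ, hQ', hQ'Q, hIJ⟩ := hI.exists_continuousOn_extension_mem_nhds hQ
  obtain ⟨θ, hθ₀, hθ⟩ := hJ.exists_hasDerivAt_of_lipschitzWith (v := pruferField Q')
    (continuousOn_const.add hQ'.nnnorm)
    (fun y ↦ continuousOn_const.add (hQ'.mul continuousOn_const))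
    (fun t _ y ↦ norm_pruferField_le t y) (fun t _ ↦ lipschitzWith_pruferField t)
    (mem_of_mem_nhds (hIJ x₀ hx₀)) y₀
  refine ⟨θ, hθ₀, fun x hx ↦ ?_⟩
  simpa only [pruferField, hQ'Q hx] using hθ x (hIJ x hx)

theorem apply_eq_of_forall_mul_pruferField_eq {φ φ' Q : ℝ → ℝ} {x x' p p' q q' : ℝ}
    (hφ : φ 0 ≠ φ π) (hφ' : φ' (π / 2) ≠ 0)
    (h : ∀ y, φ' y * pruferField Q x y = q - p * φ y)
    (h' : ∀ y, φ' y * pruferField Q x' y = q' - p' * φ y) : Q x = Q x' := by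
  have h₀ := h 0
  have hπ := h π
  have hπ₂ := h (π / 2)
  have h₀' := h' 0
  have hπ' := h' π
  have hπ₂' := h' (π / 2)
  simp only [pruferField_zero, pruferField_pi, pruferField_pi_div_two, mul_one]
    at h₀ hπ hπ₂ h₀' hπ' hπ₂'
  have hp : p = p' := by
    have : (p - p') * (φ 0 - φ π) = 0 := by linear_combination h₀ - hπ - h₀' + hπ'
    exact sub_eq_zero.1 ((mul_eq_zero.1 this).resolve_right (sub_ne_zero.2 hφ))
  subst hp
  have hq : q = q' := by linarith
  subst hq
  exact mul_left_cancel₀ hφ' (by linarith)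

theorem prufer_linearizable_implies_Q_constant_general
    (I : Set ℝ) (hI : I.OrdConnected)
    (Q : ℝ → ℝ) (hQ : ContinuousOn Q I)
    (φ : ℝ → ℝ) (hφ : ContDiff ℝ 2 φ) (hφ' : ∀ y, deriv φ y ≠ 0)
    (p q : ℝ → ℝ)
    (hlin : ∀ θ : ℝ → ℝ,
      (∀ x ∈ I, HasDerivAt θ
        (Real.cos (θ x) ^ 2 + Q x * Real.sin (θ x) ^ 2) x) →
      ∀ x ∈ I, HasDerivAt (φ ∘ θ) (q x - p x * φ (θ x)) x) :
    ∀ x ∈ I, ∀ x' ∈ I, Q x = Q x' := by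
  have hφ_diff : Differentiable ℝ φ := hφ.differentiable (by norm_num)
  have hφ0π : φ 0 ≠ φ π := fun h ↦ by
    obtain ⟨c, -, hc⟩ := exists_deriv_eq_zero pi_pos hφ_diff.continuous.continuousOn h
    exact hφ' c hc
  have hpointwise : ∀ x ∈ I, ∀ y, deriv φ y * pruferField Q x y = q x - p x * φ y := by
    intro x hx y
    obtain ⟨θ, rfl, hθ⟩ := exists_pruferField_solution hI hQ hx y
    exact ((hφ_diff (θ x)).hasDerivAt.comp x (hθ x hx)).unique (hlin θ hθ x hx)
  intro x hx x' hx'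
  exact apply_eq_of_forall_mul_pruferField_eq hφ0π (hφ' _) (hpointwise x hx) (hpointwise x' hx')

/-- Analytical core of Theorem 4.1: if a diffeomorphic transform of every
solution of the Prüfer equation solves a fixed linear first-order equation,
then `Q` is constant. -/
theorem prufer_linearizable_implies_Q_constant
    (I : Set ℝ) (hI : I.OrdConnected)
    (Q : ℝ → ℝ) (hQ : ContinuousOn Q I)
    (φ : ℝ → ℝ) (hφ : ContDiff ℝ 2 φ) (hφ' : ∀ y, deriv φ y ≠ 0)
    (p q : ℝ → ℝ) (hp : ContinuousOn p I) (hq : ContinuousOn q I)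
    (hlin : ∀ θ : ℝ → ℝ,
      (∀ x ∈ I, HasDerivAt θ
        (Real.cos (θ x) ^ 2 + Q x * Real.sin (θ x) ^ 2) x) →
      ∀ x ∈ I, HasDerivAt (φ ∘ θ) (q x - p x * φ (θ x)) x) :
    ∀ x ∈ I, ∀ x' ∈ I, Q x = Q x' :=
  prufer_linearizable_implies_Q_constant_general I hI Q hQ φ hφ hφ' p q hlin
end
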